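/- Assume: (i) 𝒰 is a compact subset of a real topological vector space and Z is a real normed space with int S ≠ ∅; (ii) the collection (u ↦ G_u(x))_{x∈X} is uniformly S⁺-concave, i.e. for all u₁, u₂ ∈ 𝒰 and λ₁, λ₂ ∈ S⁺ there exist ū ∈ 𝒰 and λ̄ ∈ S⁺ with λ₁(G_{u₁}(x)) + λ₂(G_{u₂}(x)) ≤ λ̄(G_ū(x)) for all x ∈ X; (iii) for each x ∈ X the map u ↦ G_u(x) is S⁺-upper semicontinuous, i.e. {(λ,u,r) ∈ S⁺×𝒰×ℝ : λ(G_u(x)) ≥ r} is closed in Z*(weak*) × 𝒰 × ℝ; (iv) for every u ∈ 𝒰 there exists x_u ∈ X with G_u(x_u) ∈ −int S. Then for every c ∈ X* with inf_{x∈F} ⟨c,x⟩ > −∞ there exists (ū, λ̄) ∈ 𝒰 × S⁺ such that inf_{x∈X} [⟨c,x⟩ + λ̄(G_ū(x))] = inf_{x∈F} ⟨c,x⟩ (stable robust strong duality for (RP_c)–(RD_c)). -/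

import Mathlib

open Pointwise

/-!
Fix `γ < a := inf_F c` and finitely many test points `E`. Some multiplier pair `(u, l)` satisfies
`γ ≤ c x + l (G u x)` on `E`: otherwise the values attainable by such pairs form a convex set in
`ℝ^E` (by uniform `S⁺`-concavity) missing the orthant `(γ, ∞)^E`, and separating the two yields
convex weights on `E`; by `S`-convexity the weighted average of `E` satisfies
`c y + l (G u y) ≤ γ` for all pairs, so it is robust feasible (`S` is its own bidual cone) with
cost `≤ γ < a`, which is absurd.

To pass from finite `E` to all of `X`, compactness of `U` and upper semicontinuity upgrade the
Slater condition to a uniform one on the weak*-compact base `{l ∈ S⁺ | l s₀ = 1}` (`s₀ ∈ int S`);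
this bounds `l s₀` for the good pairs, which therefore live in a compact set (Banach–Alaoglu).
The good pairs for `(x, γ)` form closed sets with the finite intersection property, and any
common point is a dual solution; weak duality gives the other inequality.
-/

open Set Filter Metric Topology

lemma nonpos_of_forall_nonneg_mul_le {a b : ℝ} (h : ∀ t : ℝ, 0 ≤ t → t * a ≤ b) :
    a ≤ 0 := by
  by_contra! ha
  have := h ((|b| + 1) / a) (by positivity)
  rw [div_mul_cancel₀ _ ha.ne'] at this
  linarith [le_abs_self b]

section PositiveDual

variable {Z : Type*} [AddCommGroup Z] [Module ℝ Z] [TopologicalSpace Z]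

def positiveDual (S : Set Z) : Set (WeakDual ℝ Z) := {l | ∀ z ∈ S, 0 ≤ l z}

lemma zero_mem_positiveDual (S : Set Z) : (0 : WeakDual ℝ Z) ∈ positiveDual S :=
  fun _ _ => le_rfl

lemma smul_mem_positiveDual {S : Set Z} {l : WeakDual ℝ Z} (hl : l ∈ positiveDual S) {r : ℝ}
    (hr : 0 ≤ r) : r • l ∈ positiveDual S :=
  fun z hz => mul_nonneg hr (hl z hz)

lemma isClosed_positiveDual (S : Set Z) : IsClosed (positiveDual S) := by
  simp only [positiveDual, ofPred_forall]
  exact isClosed_biInter fun z _ => isClosed_le continuous_const (WeakDual.eval_continuous z)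

lemma mem_neg_of_forall_le [IsTopologicalAddGroup Z] [ContinuousSMul ℝ Z]
    [LocallyConvexSpace ℝ Z] {S : Set Z} (hS_closed : IsClosed S) (hS_conv : Convex ℝ S)
    (hS_cone : ∀ r : ℝ, 0 ≤ r → ∀ z ∈ S, r • z ∈ S) (h0S : (0 : Z) ∈ S) {z : Z} {C : ℝ}
    (hz : ∀ l ∈ positiveDual S, l z ≤ C) : z ∈ -S := by
  by_contra hzS
  obtain ⟨f, u, hf, hfz⟩ :=
    geometric_hahn_banach_closed_point hS_conv.neg hS_closed.neg hzS
  have hf_pos : (f : WeakDual ℝ Z) ∈ positiveDual S := fun s hs =>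
    neg_nonpos.1 <| nonpos_of_forall_nonneg_mul_le (b := u) fun t ht => by
      have := hf (-(t • s)) (by simpa using hS_cone t ht s hs)
      simp only [map_neg, map_smul, smul_eq_mul] at this
      rw [mul_neg]
      exact this.le
  have hu : 0 < u := by simpa using hf 0 (by simpa using h0S)
  have : f z ≤ 0 := nonpos_of_forall_nonneg_mul_le (b := C) fun t ht =>
    hz _ (smul_mem_positiveDual hf_pos ht)
  linarith

end PositiveDual

lemma sum_smul_sub_mem_of_convex_epigraph {X Z : Type*} [AddCommGroup X] [Module ℝ X]
    [AddCommGroup Z] [Module ℝ Z] {S : Set Z} (h0S : (0 : Z) ∈ S) {g : X → Z}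
    (hg : Convex ℝ {p : X × Z | p.2 - g p.1 ∈ S}) {ι : Type*} {s : Finset ι} {t : ι → ℝ}
    (ht₀ : ∀ i ∈ s, 0 ≤ t i) (ht₁ : ∑ i ∈ s, t i = 1) (x : ι → X) :
    ∑ i ∈ s, t i • g (x i) - g (∑ i ∈ s, t i • x i) ∈ S := by
  have := hg.sum_mem ht₀ ht₁ (z := fun i => (x i, g (x i))) fun _ _ => by simpa using h0S
  simpa [Prod.fst_sum, Prod.snd_sum] using this

lemma exists_mem_stdSimplex_sum_mul_le {ι : Type*} [Fintype ι] {A : Set (ι → ℝ)}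
    (hA : Convex ℝ A) (hA_ne : A.Nonempty) {γ : ℝ} (h : ∀ r ∈ A, ∃ i, r i ≤ γ) :
    ∃ t ∈ stdSimplex ℝ ι, ∀ r ∈ A, ∑ i, t i * r i ≤ γ := by
  classical
  set Q : Set (ι → ℝ) := univ.pi fun _ => Ioi γ
  have hQA : Disjoint Q A := disjoint_left.2 fun r hrQ hrA =>
    let ⟨i, hi⟩ := h r hrA; hi.not_gt (hrQ i (mem_univ i))
  obtain ⟨f, v, hfQ, hfA⟩ := geometric_hahn_banach_open (convex_pi fun _ _ => convex_Ioi γ)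
    (isOpen_set_pi finite_univ fun _ _ => isOpen_Ioi) hA hQA
  set e : ι → ι → ℝ := fun i j => if i = j then 1 else 0
  set p : ι → ℝ := fun i => f (e i)
  have hf : ∀ r, f r = ∑ i, r i * p i := fun r =>
    (f : (ι → ℝ) →ₗ[ℝ] ℝ).pi_apply_eq_sum_univ r
  have hfQ' : ∀ b, γ < b → b * ∑ i, p i < v := fun b hb => by
    simpa [hf, Finset.mul_sum] using hfQ (fun _ => b) fun _ _ => hb
  have hp : ∀ i, p i ≤ 0 := fun i =>
    nonpos_of_forall_nonneg_mul_le (b := v - f fun _ => γ + 1) fun s hs => by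
      have := hfQ ((fun _ => γ + 1) + s • e i) fun j _ => by
        by_cases hij : i = j <;> simp [e, hij]
        linarith
      rw [map_add, map_smul, smul_eq_mul] at this
      linarith
  obtain ⟨r₀, hr₀⟩ := hA_ne
  set P := ∑ i, p i
  have hP : P < 0 := by
    refine (Finset.sum_nonpos fun i _ => hp i).lt_of_ne fun hP => ?_
    have hp0 := (Finset.sum_eq_zero_iff_of_nonpos fun i _ => hp i).1 hP
    have h1 := hfQ' (γ + 1) (by linarith)
    have h2 := hfA r₀ hr₀
    rw [show P = 0 from hP, mul_zero] at h1
    simp [hf, hp0] at h2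
    linarith
  have hγP : γ * P ≤ v := le_of_forall_pos_lt_add fun ε hε => by
    have := hfQ' (γ + ε / -P) (by have := div_pos hε (neg_pos.2 hP); linarith)
    rw [add_mul, div_mul_eq_mul_div, div_neg, mul_div_assoc, div_self hP.ne, mul_one] at this
    linarith
  refine ⟨fun i => p i / P, ⟨fun i => div_nonneg_of_nonpos (hp i) hP.le, ?_⟩,
    fun r hr => ?_⟩
  · rw [← Finset.sum_div, div_self hP.ne]
  · have hsum : ∑ i, p i / P * r i = f r / P := by
      rw [hf, Finset.sum_div]
      exact Finset.sum_congr rfl fun i _ => by ring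
    rw [hsum, div_le_iff_of_neg hP]
    exact hγP.trans (hfA r hr)

section Normed

variable {Z : Type*} [NormedAddCommGroup Z] [NormedSpace ℝ Z]

lemma abs_apply_le_of_ball_subset {S : Set Z} {s₀ : Z} {r : ℝ} (hball : ball s₀ r ⊆ S)
    {l : WeakDual ℝ Z} (hl : l ∈ positiveDual S) {z : Z} (hz : ‖z‖ < r) : |l z| ≤ l s₀ := by
  have h₁ := hl _ (hball (by simpa [dist_eq_norm] using hz : s₀ + z ∈ ball s₀ r))
  have h₂ := hl _ (hball (by simpa [dist_eq_norm] using hz : s₀ - z ∈ ball s₀ r))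
  rw [map_add] at h₁
  rw [map_sub] at h₂
  exact abs_le.2 ⟨by linarith, by linarith⟩

lemma isCompact_positiveDual_le {S : Set Z} {s₀ : Z} (hs₀ : s₀ ∈ interior S) (T : ℝ) :
    IsCompact {l ∈ positiveDual S | l s₀ ≤ T} := by
  obtain ⟨r, hr, hball⟩ := Metric.isOpen_iff.mp isOpen_interior s₀ hs₀
  have hT : 0 < |T| + 1 := by positivity
  refine (WeakDual.isCompact_polar ℝ (ball_mem_nhds 0 (div_pos hr hT))).of_isClosed_subset
    ((isClosed_positiveDual S).inter
      (isClosed_le (WeakDual.eval_continuous s₀) continuous_const)) ?_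
  rintro l ⟨hl, hlT⟩ z hz
  rw [mem_ball_zero_iff, lt_div_iff₀ hT] at hz
  have := abs_apply_le_of_ball_subset (hball.trans interior_subset) hl
    (z := (|T| + 1) • z) (by rwa [norm_smul, Real.norm_of_nonneg hT.le, mul_comm])
  rw [map_smul, smul_eq_mul, abs_mul, abs_of_pos hT] at this
  rw [Real.norm_eq_abs]
  exact (mul_le_iff_le_one_right hT).1
    (this.trans (hlT.trans (by linarith [le_abs_self T])))

lemma exists_pos_mul_le_of_mem_interior {S : Set Z} (s₀ : Z) {z : Z}
    (hz : z ∈ interior S) : ∃ ε > 0, ∀ l ∈ positiveDual S, ε * l s₀ ≤ l z := by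
  have hcont : Tendsto (fun ε : ℝ => z - ε • s₀) (𝓝 0) (𝓝 z) := by
    have : Continuous fun ε : ℝ => z - ε • s₀ := by fun_prop
    simpa using this.tendsto 0
  obtain ⟨ε, hεS, hε⟩ := (((hcont.eventually (mem_interior_iff_mem_nhds.1 hz)).filter_mono
    nhdsWithin_le_nhds).and (self_mem_nhdsWithin (s := Ioi (0 : ℝ)) (a := 0))).exists
  refine ⟨ε, hε, fun l hl => ?_⟩
  have := hl _ hεS
  rw [map_sub, map_smul, smul_eq_mul] at this
  linarith

end Normed

lemma exists_dual_pair_ge_on_finset {X Z W : Type*} [AddCommGroup X] [Module ℝ X]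
    [AddCommGroup Z] [Module ℝ Z] [TopologicalSpace Z] [IsTopologicalAddGroup Z]
    [ContinuousSMul ℝ Z] [LocallyConvexSpace ℝ Z]
    {S : Set Z} (hS_closed : IsClosed S) (hS_conv : Convex ℝ S)
    (hS_cone : ∀ r : ℝ, 0 ≤ r → ∀ z ∈ S, r • z ∈ S) (h0S : (0 : Z) ∈ S)
    {U : Set W} (hU : U.Nonempty) {G : W → X → Z}
    (hG_conv : ∀ u ∈ U, Convex ℝ {p : X × Z | p.2 - G u p.1 ∈ S})
    (hconc : ∀ u₁ ∈ U, ∀ u₂ ∈ U, ∀ l₁ l₂ : WeakDual ℝ Z,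
      l₁ ∈ positiveDual S → l₂ ∈ positiveDual S →
      ∃ u₃ ∈ U, ∃ l₃ ∈ positiveDual S, ∀ x, l₁ (G u₁ x) + l₂ (G u₂ x) ≤ l₃ (G u₃ x))
    (c : X →ₗ[ℝ] ℝ) {a : ℝ} (ha : ∀ x, (∀ u ∈ U, G u x ∈ -S) → a ≤ c x)
    {γ : ℝ} (hγ : γ < a) (E : Finset X) :
    ∃ u ∈ U, ∃ l ∈ positiveDual S, ∀ x ∈ E, γ ≤ c x + l (G u x) := by
  by_contra! h
  obtain ⟨u₀, hu₀⟩ := hU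
  set A : Set (E → ℝ) :=
    {r | ∃ u ∈ U, ∃ l ∈ positiveDual S, ∀ i : E, r i ≤ c i + l (G u i)}
  have hA_conv : Convex ℝ A := by
    rintro r ⟨u₁, hu₁, l₁, hl₁, hr⟩ r' ⟨u₂, hu₂, l₂, hl₂, hr'⟩ s t hs ht hst
    obtain ⟨u₃, hu₃, l₃, hl₃, hconc₃⟩ := hconc u₁ hu₁ u₂ hu₂ (s • l₁) (t • l₂)
      (smul_mem_positiveDual hl₁ hs) (smul_mem_positiveDual hl₂ ht)
    refine ⟨u₃, hu₃, l₃, hl₃, fun i => ?_⟩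
    have h₃ := hconc₃ i
    have h₁ := mul_le_mul_of_nonneg_left (hr i) hs
    have h₂ := mul_le_mul_of_nonneg_left (hr' i) ht
    have hc : c i = s * c i + t * c i := by rw [← add_mul, hst, one_mul]
    change s * l₁ _ + t * l₂ _ ≤ _ at h₃
    change s * r i + t * r' i ≤ _
    linarith
  have hA_ne : A.Nonempty :=
    ⟨fun i => c i, u₀, hu₀, 0, zero_mem_positiveDual S, fun i => (add_zero _).ge⟩
  obtain ⟨t, ⟨ht₀, ht₁⟩, ht⟩ :=
    exists_mem_stdSimplex_sum_mul_le hA_conv hA_ne (γ := γ) fun r ⟨u, hu, l, hl, hr⟩ =>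
      let ⟨x, hx, hlt⟩ := h u hu l hl
      ⟨⟨x, hx⟩, (hr _).trans hlt.le⟩
  set y := ∑ i, t i • (i : X)
  have hy : ∀ u ∈ U, ∀ l ∈ positiveDual S, c y + l (G u y) ≤ γ := by
    intro u hu l hl
    have hJ := hl _ (sum_smul_sub_mem_of_convex_epigraph h0S (hG_conv u hu)
      (fun i _ => ht₀ i) ht₁ Subtype.val)
    have := ht _ ⟨u, hu, l, hl, fun i => le_rfl⟩
    simp only [map_sub, map_sum, map_smul, smul_eq_mul, mul_add, Finset.sum_add_distrib,
      y] at hJ this ⊢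
    linarith
  have hyF : ∀ u ∈ U, G u y ∈ -S := fun u hu =>
    mem_neg_of_forall_le hS_closed hS_conv hS_cone h0S (C := γ - c y) fun l hl => by
      linarith [hy u hu l hl]
  have := hy u₀ hu₀ 0 (zero_mem_positiveDual S)
  change c y + 0 ≤ γ at this
  linarith [ha y hyF]

section Slater

variable {X Z W : Type*} [NormedAddCommGroup Z] [NormedSpace ℝ Z] [TopologicalSpace W]

lemma exists_finset_uniform_slater {S : Set Z} {s₀ : Z} (hs₀ : s₀ ∈ interior S)
    {U : Set W} (hU : IsCompact U) {G : W → X → Z}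
    (husc : ∀ x, IsClosed {p : WeakDual ℝ Z × U × ℝ |
      p.1 ∈ positiveDual S ∧ p.2.2 ≤ p.1 (G p.2.1 x)})
    (hSlater : ∀ u ∈ U, ∃ x, G u x ∈ -interior S) :
    ∃ E₀ : Finset X, ∃ δ > 0, ∀ u ∈ U, ∀ l ∈ positiveDual S, l s₀ = 1 →
      ∃ x ∈ E₀, l (G u x) < -δ := by
  choose x hx using fun u : U => hSlater u u.2
  choose ε hε_pos hε using fun u => exists_pos_mul_le_of_mem_interior s₀ (hx u)
  set O : U → Set (WeakDual ℝ Z × U) := fun u =>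
    {p | ¬(p.1 ∈ positiveDual S ∧ -(ε u / 2) ≤ p.1 (G p.2 (x u)))}
  have hO : ∀ u, IsOpen (O u) := fun u =>
    ((husc (x u)).preimage (by fun_prop :
      Continuous fun p : WeakDual ℝ Z × U => (p.1, p.2, -(ε u / 2)))).isOpen_compl
  have hB : IsCompact ({l ∈ positiveDual S | l s₀ = 1} ×ˢ (univ : Set U)) :=
    ((isCompact_positiveDual_le hs₀ 1).of_isClosed_subset
      ((isClosed_positiveDual S).inter (isClosed_eq (WeakDual.eval_continuous s₀)
        continuous_const)) fun l hl => ⟨hl.1, hl.2.le⟩).prod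
      (isCompact_iff_isCompact_univ.1 hU)
  -- the Slater point of `u` keeps `l (G u' (x u)) < -ε u / 2` near each `(l, u)` of the base
  obtain ⟨I, hI⟩ := hB.elim_finite_subcover O hO fun ⟨l, u⟩ ⟨⟨hl, hl₁⟩, _⟩ =>
    mem_iUnion.2 ⟨u, fun h => by
      have := hε u l hl
      rw [hl₁, map_neg] at this
      linarith [hε_pos u, h.2]⟩
  obtain ⟨δ, hδ, hδ_pos⟩ := (((eventually_all_finset I).2 fun u _ =>
    eventually_nhdsWithin_of_eventually_nhds
      (eventually_lt_nhds (half_pos (hε_pos u)))).and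
    (self_mem_nhdsWithin (s := Ioi (0 : ℝ)) (a := 0))).exists
  classical
  refine ⟨I.image x, δ, hδ_pos, fun u hu l hl hl₁ => ?_⟩
  obtain ⟨v, hvI, hv⟩ := mem_iUnion₂.1 (hI (mk_mem_prod ⟨hl, hl₁⟩ (mem_univ ⟨u, hu⟩)))
  refine ⟨x v, Finset.mem_image_of_mem _ hvI, ?_⟩
  have := hδ v hvI
  simp only [O, mem_ofPred_eq, not_and, not_le] at hv
  linarith [hv hl]

lemma exists_finset_multiplier_bound {S : Set Z} {s₀ : Z} (hs₀ : s₀ ∈ interior S)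
    {U : Set W} (hU : IsCompact U) {G : W → X → Z}
    (husc : ∀ x, IsClosed {p : WeakDual ℝ Z × U × ℝ |
      p.1 ∈ positiveDual S ∧ p.2.2 ≤ p.1 (G p.2.1 x)})
    (hSlater : ∀ u ∈ U, ∃ x, G u x ∈ -interior S) (c : X → ℝ) (β : ℝ) :
    ∃ E₀ : Finset X, ∃ T, ∀ u ∈ U, ∀ l ∈ positiveDual S,
      (∀ x ∈ E₀, β ≤ c x + l (G u x)) → l s₀ ≤ T := by
  obtain ⟨E₀, δ, hδ, hE₀⟩ := exists_finset_uniform_slater (X := X) hs₀ hU husc hSlater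
  refine ⟨E₀, max 0 ((∑ x ∈ E₀, |c x| - β) / δ), fun u hu l hl hβ => ?_⟩
  rcases le_or_gt (l s₀) 0 with h | h
  · exact h.trans (le_max_left _ _)
  obtain ⟨x, hx, hlx⟩ := hE₀ u hu ((l s₀)⁻¹ • l)
    (smul_mem_positiveDual hl (inv_nonneg.2 h.le)) (inv_mul_cancel₀ h.ne')
  change (l s₀)⁻¹ * l (G u x) < -δ at hlx
  rw [inv_mul_lt_iff₀ h] at hlx
  have hcx : c x ≤ ∑ x ∈ E₀, |c x| :=
    (le_abs_self _).trans (Finset.single_le_sum (fun x _ => abs_nonneg (c x)) hx)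
  refine le_max_of_le_right ((le_div_iff₀ hδ).2 ?_)
  linarith [hβ x hx]

end Slater

lemma IsCompact.exists_forall_le_of_forall_finset {P X : Type*} [TopologicalSpace P]
    {K : Set P} (hK : IsCompact K) {φ : P → X → ℝ}
    (hφ : ∀ x γ, IsClosed (K ∩ {p | γ ≤ φ p x})) {a : ℝ}
    (hfin : ∀ (E : Finset X) γ, γ < a → ∃ p ∈ K, ∀ x ∈ E, γ ≤ φ p x) :
    ∃ p ∈ K, ∀ x, a ≤ φ p x := by
  classical
  -- levels `a - 1 / (n + 1)` rather than all `γ < a`, so that finitely many share a level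
  obtain ⟨p, hpK, hp⟩ := hK.inter_iInter_nonempty
    (fun i : X × ℕ => K ∩ {p | a - 1 / ((i.2 : ℝ) + 1) ≤ φ p i.1}) (fun i => hφ _ _)
    fun I => by
      obtain ⟨p, hpK, hp⟩ := hfin (I.image Prod.fst)
        (a - 1 / (((I.sup Prod.snd : ℕ) : ℝ) + 1)) (sub_lt_self a (by positivity))
      refine ⟨p, hpK, mem_iInter₂.2 fun i hi =>
        ⟨hpK, le_trans ?_ (hp _ (Finset.mem_image_of_mem _ hi))⟩⟩
      gcongr
      exact Finset.le_sup hi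
  refine ⟨p, hpK, fun x => le_of_forall_pos_lt_add fun ε hε => ?_⟩
  obtain ⟨n, hn⟩ := exists_nat_one_div_lt hε
  have : a - 1 / ((n : ℝ) + 1) ≤ φ p x := (mem_iInter.1 hp (x, n)).2
  linarith

lemma exists_dual_solution {X Z W : Type*} [AddCommGroup X] [Module ℝ X]
    [NormedAddCommGroup Z] [NormedSpace ℝ Z] [TopologicalSpace W]
    {S : Set Z} (hS_closed : IsClosed S) (hS_conv : Convex ℝ S)
    (hS_cone : ∀ r : ℝ, 0 ≤ r → ∀ z ∈ S, r • z ∈ S) {s₀ : Z} (hs₀ : s₀ ∈ interior S)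
    {U : Set W} (hU : U.Nonempty) (hU_cpt : IsCompact U) {G : W → X → Z}
    (hG_conv : ∀ u ∈ U, Convex ℝ {p : X × Z | p.2 - G u p.1 ∈ S})
    (hconc : ∀ u₁ ∈ U, ∀ u₂ ∈ U, ∀ l₁ l₂ : WeakDual ℝ Z,
      l₁ ∈ positiveDual S → l₂ ∈ positiveDual S →
      ∃ u₃ ∈ U, ∃ l₃ ∈ positiveDual S, ∀ x, l₁ (G u₁ x) + l₂ (G u₂ x) ≤ l₃ (G u₃ x))
    (husc : ∀ x, IsClosed {p : WeakDual ℝ Z × U × ℝ |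
      p.1 ∈ positiveDual S ∧ p.2.2 ≤ p.1 (G p.2.1 x)})
    (hSlater : ∀ u ∈ U, ∃ x, G u x ∈ -interior S)
    (c : X →ₗ[ℝ] ℝ) {a : ℝ} (ha : ∀ x, (∀ u ∈ U, G u x ∈ -S) → a ≤ c x) :
    ∃ u ∈ U, ∃ l ∈ positiveDual S, ∀ x, a ≤ c x + l (G u x) := by
  classical
  have h0S : (0 : Z) ∈ S := by simpa using hS_cone 0 le_rfl s₀ (interior_subset hs₀)
  obtain ⟨E₀, T, hT⟩ :=
    exists_finset_multiplier_bound hs₀ hU_cpt husc hSlater c (a - 1)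
  set K : Set (WeakDual ℝ Z × U) := {l ∈ positiveDual S | l s₀ ≤ T} ×ˢ univ
  have hK : IsCompact K :=
    (isCompact_positiveDual_le hs₀ T).prod (isCompact_iff_isCompact_univ.1 hU_cpt)
  have hK_closed : ∀ x γ, IsClosed (K ∩ {p | γ ≤ c x + p.1 (G p.2 x)}) := fun x γ => by
    have hK_eq : K ∩ {p | γ ≤ c x + p.1 (G p.2 x)} =
        K ∩ {p | p.1 ∈ positiveDual S ∧ γ - c x ≤ p.1 (G p.2 x)} :=
      Set.ext fun p => and_congr_right fun hp =>
        ⟨fun h => ⟨hp.1.1, by linarith [show γ ≤ c x + p.1 (G p.2 x) from h]⟩,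
          fun h => show γ ≤ _ by linarith [h.2]⟩
    rw [hK_eq]
    exact (((isClosed_positiveDual S).inter (isClosed_le (WeakDual.eval_continuous s₀)
      continuous_const)).prod isClosed_univ).inter ((husc x).preimage (by fun_prop :
        Continuous fun p : WeakDual ℝ Z × U => (p.1, p.2, γ - c x)))
  obtain ⟨⟨l, u⟩, ⟨⟨hl, -⟩, -⟩, hlu⟩ := hK.exists_forall_le_of_forall_finset hK_closed
    fun E γ hγ => by
      obtain ⟨u, hu, l, hl, h⟩ := exists_dual_pair_ge_on_finset hS_closed hS_conv hS_cone
        h0S hU hG_conv hconc c ha (max_lt hγ (sub_one_lt a)) (E ∪ E₀)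
      exact ⟨(l, ⟨u, hu⟩), ⟨⟨hl, hT u hu l hl fun x hx =>
        (le_max_right _ _).trans (h x (Finset.mem_union_right _ hx))⟩, mem_univ _⟩,
        fun x hx => (le_max_left _ _).trans (h x (Finset.mem_union_left _ hx))⟩
  exact ⟨u, u.2, l, hl, hlu⟩

theorem stmt6
    {X Z W : Type*}
    [AddCommGroup X] [Module ℝ X] [TopologicalSpace X]
    [NormedAddCommGroup Z] [NormedSpace ℝ Z]
    [TopologicalSpace W]
    (S : Set Z) (hS_closed : IsClosed S) (hS_conv : Convex ℝ S)
    (hS_cone : ∀ r : ℝ, 0 ≤ r → ∀ z ∈ S, r • z ∈ S)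
    (hS_int : (interior S).Nonempty)
    (U : Set W) (hU : U.Nonempty) (hU_cpt : IsCompact U) (G : W → X → Z)
    (hG_conv : ∀ u ∈ U, Convex ℝ {p : X × Z | p.2 - G u p.1 ∈ S})
    (hconc : ∀ u₁ ∈ U, ∀ u₂ ∈ U, ∀ l₁ l₂ : WeakDual ℝ Z,
      (∀ z ∈ S, 0 ≤ l₁ z) → (∀ z ∈ S, 0 ≤ l₂ z) →
      ∃ u₃ ∈ U, ∃ l₃ : WeakDual ℝ Z, (∀ z ∈ S, 0 ≤ l₃ z) ∧
        ∀ x : X, l₁ (G u₁ x) + l₂ (G u₂ x) ≤ l₃ (G u₃ x))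
    (husc : ∀ x : X, IsClosed {p : WeakDual ℝ Z × U × ℝ |
      (∀ z ∈ S, 0 ≤ p.1 z) ∧ p.2.2 ≤ p.1 (G p.2.1.1 x)})
    (hSlater : ∀ u ∈ U, ∃ x : X, G u x ∈ -interior S)
    (hF : {x : X | ∀ u ∈ U, G u x ∈ -S}.Nonempty) :
    ∀ c : WeakDual ℝ X,
      ⊥ < ⨅ x : {x : X | ∀ u ∈ U, G u x ∈ -S}, ((c x.1 : ℝ) : EReal) →
      ∃ u ∈ U, ∃ l : WeakDual ℝ Z, (∀ z ∈ S, 0 ≤ l z) ∧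
        (⨅ x : X, ((c x + l (G u x) : ℝ) : EReal)) =
          ⨅ x : {x : X | ∀ u ∈ U, G u x ∈ -S}, ((c x.1 : ℝ) : EReal) := by
  intro c hc
  obtain ⟨s₀, hs₀⟩ := hS_int
  obtain ⟨x₀, hx₀⟩ := hF
  have hinf_le : ∀ x, (∀ u ∈ U, G u x ∈ -S) →
      ⨅ y : {x : X | ∀ u ∈ U, G u x ∈ -S}, (c y.1 : EReal) ≤ c x := fun x hx =>
    iInf_le_of_le ⟨x, hx⟩ le_rfl
  obtain ⟨a, ha⟩ :
      ∃ a : ℝ, (a : EReal) = ⨅ x : {x : X | ∀ u ∈ U, G u x ∈ -S}, (c x.1 : EReal) :=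
    ⟨_, EReal.coe_toReal ((hinf_le x₀ hx₀).trans_lt (EReal.coe_lt_top _)).ne hc.ne'⟩
  have ha_le : ∀ x, (∀ u ∈ U, G u x ∈ -S) → a ≤ c x := fun x hx =>
    EReal.coe_le_coe_iff.1 (ha ▸ hinf_le x hx)
  obtain ⟨u, hu, l, hl, hdual⟩ := exists_dual_solution hS_closed hS_conv hS_cone hs₀ hU
    hU_cpt hG_conv hconc husc hSlater (c : X →ₗ[ℝ] ℝ) ha_le
  refine ⟨u, hu, l, hl, ?_⟩
  refine le_antisymm (le_iInf fun x => iInf_le_of_le x.1 (EReal.coe_le_coe_iff.2 ?_))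
    (ha ▸ le_iInf fun x => EReal.coe_le_coe_iff.2 (hdual x))
  have := hl _ (x.2 u hu)
  rw [map_neg] at this
  linarith
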